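/- Let γ ∈ (1/2,1) and let f : [0,1] → [0,1] be the Liverani–Saussol–Vaienti intermittency map f(x) = x(1 + 2^γ x^γ) for x ∈ [0,1/2] and f(x) = 2x − 1 for x ∈ (1/2,1]. Let Y = [1/2,1] with return time r(y) = inf{k ≥ 1 : f^k(y) ∈ Y} (finite for every y ∈ Y). Let φ : [0,1] → ℝ be Hölder continuous with φ(0) ≠ 0, with ergodic sums φ_ℓ = ∑_{i=0}^{ℓ-1} φ∘f^i, and define Φ*(y) = (max_{0≤ℓ'≤ℓ≤r(y)} (φ_{ℓ'}(y) − φ_ℓ(y))) ∧ (max_{0≤ℓ'≤ℓ≤r(y)} (φ_ℓ(y) − φ_{ℓ'}(y))). Then Φ* is bounded on Y: there exists a constant C > 0 (one may take C = (k+1)·sup|φ| for a suitable integer k depending only on f and φ) such that Φ*(y) ≤ C for every y ∈ Y. -/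

import Mathlib

/-- The Liverani–Saussol–Vaienti intermittency map with parameter `γ`:
`f(x) = x(1 + 2^γ x^γ)` for `x ∈ [0,1/2]` and `f(x) = 2x − 1` for `x ∈ (1/2,1]`. -/
noncomputable def lsv (γ : ℝ) (x : ℝ) : ℝ :=
  if x ≤ 1 / 2 then x * (1 + 2 ^ γ * x ^ γ) else 2 * x - 1

/-- Return time `r(x) = inf {k ≥ 1 : f^k(x) ∈ Y}` (with junk value `0` if there is no return). -/
noncomputable def returnTime {X : Type*} (f : X → X) (Y : Set X) (x : X) : ℕ :=
  sInf {k : ℕ | 1 ≤ k ∧ f^[k] x ∈ Y}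

/-- Ergodic sums `φ_ℓ = ∑_{i=0}^{ℓ-1} φ ∘ f^i`. -/
noncomputable def ergSum {X : Type*} (f : X → X) (φ : X → ℝ) (k : ℕ) (x : X) : ℝ :=
  ∑ i ∈ Finset.range k, φ (f^[i] x)

/-- `Φ*(y) = (max_{0≤ℓ'≤ℓ≤r(y)} (φ_{ℓ'}(y) − φ_ℓ(y))) ∧ (max_{0≤ℓ'≤ℓ≤r(y)} (φ_ℓ(y) − φ_{ℓ'}(y)))`. -/
noncomputable def excStar {X : Type*} (f : X → X) (Y : Set X) (φ : X → ℝ) (y : X) : ℝ :=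
  min
    ((Finset.range (returnTime f Y y + 1)).sup' Finset.nonempty_range_add_one fun ℓ =>
      (Finset.range (ℓ + 1)).sup' Finset.nonempty_range_add_one fun ℓ' =>
        ergSum f φ ℓ' y - ergSum f φ ℓ y)
    ((Finset.range (returnTime f Y y + 1)).sup' Finset.nonempty_range_add_one fun ℓ =>
      (Finset.range (ℓ + 1)).sup' Finset.nonempty_range_add_one fun ℓ' =>
        ergSum f φ ℓ y - ergSum f φ ℓ' y)

/-! Near `0` the observable `φ` has the sign of `φ 0`, say positive on `[0, δ]`. On `[δ, 1/2]` the
map moves points to the right by at least `2^γ δ^(1+γ)`, so an excursion from `Y = [1/2, 1]` spends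
only boundedly many steps in `[δ, 1/2)` and all its other steps (except the first) in `[0, δ)`.
Hence along an excursion the ergodic sums can decrease by at most a bounded amount, which bounds
one of the two maxima defining `Φ*`; replacing `φ` by `-φ` exchanges the two maxima. -/

open Filter Topology Finset

lemma continuousOn_of_abs_sub_le_mul_rpow {s : Set ℝ} {φ : ℝ → ℝ} {η H : ℝ} (hη : 0 < η)
    (h : ∀ x ∈ s, ∀ y ∈ s, |φ x - φ y| ≤ H * |x - y| ^ η) : ContinuousOn φ s := by
  intro y hy
  have hlim : Tendsto (fun x => H * |x - y| ^ η) (𝓝[s] y) (𝓝 0) := by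
    have hcont : Continuous fun x : ℝ => H * |x - y| ^ η := by fun_prop (disch := positivity)
    simpa [ContinuousWithinAt, Real.zero_rpow hη.ne'] using
      hcont.continuousWithinAt (s := s) (x := y)
  rw [ContinuousWithinAt, tendsto_iff_dist_tendsto_zero]
  refine squeeze_zero' (.of_forall fun _ => dist_nonneg) ?_ hlim
  filter_upwards [self_mem_nhdsWithin] with x hx using h x hx y hy

lemma neg_mul_le_sum_of_card_filter_neg_le {ι : Type*} {s : Finset ι} {a : ι → ℝ} {S : ℝ}
    {N : ℕ} (hS : 0 ≤ S) (ha : ∀ i ∈ s, -S ≤ a i) (hN : #{i ∈ s | a i < 0} ≤ N) :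
    -(N * S) ≤ ∑ i ∈ s, a i := by
  rw [← sum_filter_add_sum_filter_not s (a · < 0)]
  have hneg : #{i ∈ s | a i < 0} • -S ≤ ∑ i ∈ s with a i < 0, a i :=
    card_nsmul_le_sum _ _ _ fun i hi => ha i (mem_filter.1 hi).1
  have hnonneg : 0 ≤ ∑ i ∈ s with ¬a i < 0, a i :=
    sum_nonneg fun i hi => not_lt.1 (mem_filter.1 hi).2
  have hcard : (#{i ∈ s | a i < 0} : ℝ) ≤ N := by exact_mod_cast hN
  rw [nsmul_eq_mul] at hneg
  nlinarith

lemma card_filter_le_le_of_lt_of_add_le {z : ℕ → ℝ} {δ b c : ℝ} {a r : ℕ} (hc : 0 < c)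
    (hlt : ∀ i ∈ Ico a r, z i < b) (hstep : ∀ i ∈ Ico a r, δ ≤ z i → z i + c ≤ z (i + 1)) :
    #{i ∈ Ico a r | δ ≤ z i} ≤ ⌈(b - δ) / c⌉₊ + 1 := by
  have hgrow : ∀ i d, a ≤ i → i + d < r → δ ≤ z i → δ + d * c ≤ z (i + d) := by
    intro i d hai hdr hi
    induction d with
    | zero => simpa using hi
    | succ d ih =>
      have hprev := ih (by omega)
      have hδ : δ ≤ z (i + d) := le_trans (le_add_of_nonneg_right (by positivity)) hprev
      have := hstep (i + d) (mem_Ico.2 ⟨by omega, by omega⟩) hδ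
      rw [← add_assoc]
      push_cast
      linarith
  calc #{i ∈ Ico a r | δ ≤ z i}
      ≤ #(Ico (r - (⌈(b - δ) / c⌉₊ + 1)) r) := by
        refine card_le_card fun i hi => ?_
        obtain ⟨hi, hδ⟩ := mem_filter.1 hi
        obtain ⟨hai, hir⟩ := mem_Ico.1 hi
        have hend : i + (r - 1 - i) = r - 1 := by omega
        have hd := hgrow i (r - 1 - i) hai (by omega) hδ
        rw [hend] at hd
        have hdc : ((r - 1 - i : ℕ) : ℝ) ≤ (b - δ) / c := by
          rw [le_div_iff₀ hc]
          linarith [hlt (r - 1) (mem_Ico.2 ⟨by omega, by omega⟩)]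
        have := (Nat.cast_le (α := ℝ)).1 (hdc.trans (Nat.le_ceil _))
        exact mem_Ico.2 ⟨by omega, hir⟩
    _ ≤ ⌈(b - δ) / c⌉₊ + 1 := by rw [Nat.card_Ico]; omega

section ErgodicSums

variable {X : Type*} (f : X → X) (Y : Set X)

lemma iterate_notMem_of_lt_returnTime {x : X} {i : ℕ} (hi : 1 ≤ i)
    (hir : i < returnTime f Y x) : f^[i] x ∉ Y :=
  fun hY => Nat.notMem_of_lt_sInf hir ⟨hi, hY⟩

lemma ergSum_sub_ergSum (φ : X → ℝ) {m n : ℕ} (hmn : m ≤ n) (x : X) :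
    ergSum f φ n x - ergSum f φ m x = ∑ i ∈ Ico m n, φ (f^[i] x) :=
  (sum_Ico_eq_sub _ hmn).symm

lemma excStar_neg (φ : X → ℝ) (y : X) :
    excStar f Y (-φ) y = excStar f Y φ y := by
  simp only [excStar, ergSum, Pi.neg_apply, sum_neg_distrib, neg_sub_neg]
  exact min_comm _ _

lemma excStar_le_of_forall_ergSum_sub_le {φ : X → ℝ} {y : X} {C : ℝ}
    (h : ∀ ℓ ≤ returnTime f Y y, ∀ ℓ' ≤ ℓ, ergSum f φ ℓ' y - ergSum f φ ℓ y ≤ C) :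
    excStar f Y φ y ≤ C :=
  (min_le_left _ _).trans <| sup'_le _ _ fun ℓ hℓ => sup'_le _ _ fun ℓ' hℓ' =>
    h ℓ (Nat.lt_succ_iff.1 (mem_range.1 hℓ)) ℓ' (Nat.lt_succ_iff.1 (mem_range.1 hℓ'))

end ErgodicSums

section LSV

variable {γ : ℝ}

lemma lsv_mapsTo (hγ : 0 ≤ γ) : Set.MapsTo (lsv γ) (Set.Icc 0 1) (Set.Icc 0 1) := by
  rintro x ⟨hx0, hx1⟩
  unfold lsv
  split_ifs with hx
  · have hpow : (2 : ℝ) ^ γ * x ^ γ ≤ 1 := by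
      rw [← Real.mul_rpow zero_le_two hx0]
      exact Real.rpow_le_one (by positivity) (by linarith) hγ
    exact ⟨by positivity, by nlinarith⟩
  · constructor <;> linarith

lemma add_le_lsv (hγ : 0 ≤ γ) {δ x : ℝ} (hδ : 0 ≤ δ) (hδx : δ ≤ x) (hx : x ≤ 1 / 2) :
    x + 2 ^ γ * (δ * δ ^ γ) ≤ lsv γ x := by
  have hx0 : 0 ≤ x := hδ.trans hδx
  calc x + 2 ^ γ * (δ * δ ^ γ) ≤ x + 2 ^ γ * (x * x ^ γ) := by gcongr
    _ = lsv γ x := by rw [lsv, if_pos hx]; ring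

lemma iterate_lsv_lt_half_of_lt_returnTime (hγ : 0 ≤ γ) {y : ℝ} (hy : y ∈ Set.Icc (1 / 2 : ℝ) 1)
    {i : ℕ} (hi : i ∈ Ico 1 (returnTime (lsv γ) (Set.Icc (1 / 2 : ℝ) 1) y)) :
    (lsv γ)^[i] y < 1 / 2 := by
  obtain ⟨hi1, hir⟩ := mem_Ico.1 hi
  have hmem := (lsv_mapsTo hγ).iterate i ⟨by linarith [hy.1], hy.2⟩
  by_contra hge
  exact iterate_notMem_of_lt_returnTime _ _ hi1 hir ⟨not_lt.1 hge, hmem.2⟩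

lemma card_filter_le_iterate_lsv_le (hγ : 0 ≤ γ) {δ : ℝ} (hδ : 0 < δ) {y : ℝ}
    (hy : y ∈ Set.Icc (1 / 2 : ℝ) 1) :
    #{i ∈ Ico 1 (returnTime (lsv γ) (Set.Icc (1 / 2 : ℝ) 1) y) | δ ≤ (lsv γ)^[i] y} ≤
      ⌈(1 / 2 - δ) / (2 ^ γ * (δ * δ ^ γ))⌉₊ + 1 := by
  refine card_filter_le_le_of_lt_of_add_le (by positivity)
    (fun i hi => iterate_lsv_lt_half_of_lt_returnTime hγ hy hi) fun i hi hδi => ?_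
  rw [Function.iterate_succ_apply']
  exact add_le_lsv hγ hδ.le hδi (iterate_lsv_lt_half_of_lt_returnTime hγ hy hi).le

theorem exists_forall_ergSum_lsv_sub_le (hγ : 0 ≤ γ) {φ : ℝ → ℝ}
    (hφ : ContinuousOn φ (Set.Icc 0 1)) (hφ0 : 0 < φ 0) :
    ∃ C : ℝ, 0 < C ∧ ∀ y ∈ Set.Icc (1 / 2 : ℝ) 1,
      ∀ ℓ ≤ returnTime (lsv γ) (Set.Icc (1 / 2 : ℝ) 1) y, ∀ ℓ' ≤ ℓ,
        ergSum (lsv γ) φ ℓ' y - ergSum (lsv γ) φ ℓ y ≤ C := by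
  obtain ⟨S, hS⟩ := isCompact_Icc.exists_bound_of_continuousOn hφ
  have hS0 : 0 < S := hφ0.trans_le ((le_abs_self _).trans (hS 0 ⟨le_rfl, zero_le_one⟩))
  have hpos : ∀ᶠ x in 𝓝[Set.Ici 0] 0, 0 < φ x := by
    rw [← nhdsWithin_Icc_eq_nhdsGE zero_lt_one]
    exact (hφ 0 ⟨le_rfl, zero_le_one⟩).eventually_const_lt hφ0
  obtain ⟨δ, hδ, hδpos⟩ := mem_nhdsGE_iff_exists_Icc_subset.1 hpos
  set K := ⌈(1 / 2 - δ) / (2 ^ γ * (δ * δ ^ γ))⌉₊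
  refine ⟨(K + 2 : ℕ) * S, by positivity, fun y hy ℓ hℓ ℓ' hℓ' => ?_⟩
  set r := returnTime (lsv γ) (Set.Icc (1 / 2 : ℝ) 1) y
  have hmem : ∀ i, (lsv γ)^[i] y ∈ Set.Icc 0 1 :=
    fun i => (lsv_mapsTo hγ).iterate i ⟨by linarith [hy.1], hy.2⟩
  have hneg : {i ∈ Ico ℓ' ℓ | φ ((lsv γ)^[i] y) < 0} ⊆
      insert 0 {i ∈ Ico 1 r | δ ≤ (lsv γ)^[i] y} := by
    intro i hi
    obtain ⟨hi, hφi⟩ := mem_filter.1 hi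
    rcases Nat.eq_zero_or_pos i with rfl | hi0
    · exact mem_insert_self _ _
    refine mem_insert_of_mem (mem_filter.2 ⟨mem_Ico.2 ⟨hi0, by grind⟩, ?_⟩)
    by_contra hlt
    exact (hδpos ⟨(hmem i).1, (not_le.1 hlt).le⟩).not_gt hφi
  have hcard := (card_le_card hneg).trans <|
    (card_insert_le _ _).trans (Nat.succ_le_succ (card_filter_le_iterate_lsv_le hγ hδ hy))
  have hsum := neg_mul_le_sum_of_card_filter_neg_le hS0.le
    (fun i _ => neg_le_of_abs_le (hS _ (hmem i))) hcard
  linarith [ergSum_sub_ergSum (lsv γ) φ hℓ' y]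

end LSV

theorem stmt14_general (γ : ℝ) (hγ0 : 1 / 2 < γ)
    (φ : ℝ → ℝ) (η H : ℝ) (hη0 : 0 < η)
    (hHolder : ∀ x ∈ Set.Icc (0 : ℝ) 1, ∀ y ∈ Set.Icc (0 : ℝ) 1,
      |φ x - φ y| ≤ H * |x - y| ^ η)
    (hφ0 : φ 0 ≠ 0) :
    ∃ C : ℝ, 0 < C ∧
      ∀ y ∈ Set.Icc (1 / 2 : ℝ) 1,
        excStar (lsv γ) (Set.Icc (1 / 2 : ℝ) 1) φ y ≤ C := by
  have hγ : 0 ≤ γ := by linarith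
  have hφ := continuousOn_of_abs_sub_le_mul_rpow hη0 hHolder
  suffices key : ∀ ψ : ℝ → ℝ, ContinuousOn ψ (Set.Icc 0 1) → 0 < ψ 0 →
      ∃ C : ℝ, 0 < C ∧ ∀ y ∈ Set.Icc (1 / 2 : ℝ) 1,
        excStar (lsv γ) (Set.Icc (1 / 2 : ℝ) 1) ψ y ≤ C by
    rcases hφ0.lt_or_gt with hneg | hpos
    · simpa only [excStar_neg] using key _ hφ.neg (neg_pos.2 hneg)
    · exact key φ hφ hpos
  intro ψ hψ hψ0
  obtain ⟨C, hC, hbound⟩ := exists_forall_ergSum_lsv_sub_le hγ hψ hψ0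
  exact ⟨C, hC, fun y hy => excStar_le_of_forall_ergSum_sub_le _ _ (hbound y hy)⟩

theorem stmt14 (γ : ℝ) (hγ0 : 1 / 2 < γ) (hγ1 : γ < 1)
    (φ : ℝ → ℝ) (η H : ℝ) (hη0 : 0 < η) (hη1 : η ≤ 1) (hH : 0 ≤ H)
    (hHolder : ∀ x ∈ Set.Icc (0 : ℝ) 1, ∀ y ∈ Set.Icc (0 : ℝ) 1,
      |φ x - φ y| ≤ H * |x - y| ^ η)
    (hφ0 : φ 0 ≠ 0) :
    ∃ C : ℝ, 0 < C ∧
      ∀ y ∈ Set.Icc (1 / 2 : ℝ) 1,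
        excStar (lsv γ) (Set.Icc (1 / 2 : ℝ) 1) φ y ≤ C :=
  stmt14_general γ hγ0 φ η H hη0 hHolder hφ0
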